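/- arXiv:1702.01070 — 2 statements merged into one kernel-verified Lean document; each statement's English description precedes it below -/
import Mathlib

section
/- With a(x,ξ) = Σ_{j=1}^∞ 2^{jd} Φ_j(ξ) e^{−i x_n 2^j} and θ_N as above, one has a(x,D)θ_N(x) = (Σ_{j=N}^{N²} 1/j) · θ(x), and consequently for any φ ∈ C_c^∞(ℝⁿ) with ⟨θ, φ⟩ = 1, ⟨a(x,D)θ_N, φ⟩ ≥ log N; in particular a(x,D)θ_N does not tend to 0 in 𝒟'(ℝⁿ) as N → ∞. -/
open MeasureTheory Metric SchwartzMap Finset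
open scoped ENNReal SchwartzMap RealInnerProductSpace FourierTransform

theorem aux_harmonic (N : ℕ) (hN : 2 ≤ N) :
    Real.log N ≤ ∑ j ∈ Finset.Icc N (N ^ 2), (1 / (j : ℝ)) := by
  have key : ∀ j : ℕ, 1 ≤ j → Real.log (j + 1) - Real.log j ≤ 1 / (j : ℝ) := by
    intro j hj
    have hj0 : (0:ℝ) < j := by exact_mod_cast hj
    have h1 := Real.log_le_sub_one_of_pos (show (0:ℝ) < ((j:ℝ)+1)/j by positivity)
    rw [Real.log_div (by positivity) (by positivity)] at h1
    have h2 : ((j:ℝ)+1)/j - 1 = 1/j := by field_simp; ring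
    linarith
  have h3 : ∑ j ∈ Finset.Icc N (N ^ 2), (Real.log (j+1) - Real.log j)
      ≤ ∑ j ∈ Finset.Icc N (N ^ 2), (1 / (j : ℝ)) := by
    apply Finset.sum_le_sum
    intro j hj
    exact key j (by have := (Finset.mem_Icc.1 hj).1; omega)
  have hle : N ≤ N ^ 2 + 1 := le_trans (Nat.le_self_pow (by norm_num) N) (Nat.le_succ _)
  have h4 : ∑ j ∈ Finset.Icc N (N ^ 2), (Real.log (j+1) - Real.log j)
      = Real.log ((N:ℝ)^2 + 1) - Real.log N := by
    rw [← Finset.Ico_add_one_right_eq_Icc, Finset.sum_Ico_eq_sum_range]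
    have h := Finset.sum_range_sub (fun i => Real.log (N + i)) (N^2 + 1 - N)
    push_cast [Nat.cast_sub hle] at h ⊢
    ring_nf at h ⊢
    convert h using 2
  have h5 : Real.log N ≤ Real.log ((N:ℝ)^2 + 1) - Real.log N := by
    have hN1 : (1:ℝ) ≤ (N:ℝ) := by exact_mod_cast le_trans (by norm_num) hN
    have := Real.log_le_log (by positivity) (show ((N:ℝ))^2 ≤ (N:ℝ)^2 + 1 by linarith)
    rw [Real.log_pow] at this
    push_cast at this
    linarith
  linarith

theorem aux_that {n : ℕ} (θ : 𝓢(EuclideanSpace ℝ (Fin n), ℂ))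
    (θhat : EuclideanSpace ℝ (Fin n) → ℂ)
    (hθhat : ∀ ξ, θhat ξ = ∫ x, Complex.exp (-(Complex.I * (⟪x, ξ⟫ : ℝ))) * θ x) :
    θhat = fun ξ => 𝓕 ⇑θ ((2 * Real.pi)⁻¹ • ξ) := by
  funext ξ
  rw [hθhat, Real.fourier_eq']
  congr 1
  funext v
  rw [smul_eq_mul]
  congr 1
  rw [real_inner_smul_right]
  have h : (2 * (Real.pi:ℂ)) ≠ 0 := by simp [Real.pi_ne_zero]
  push_cast
  rw [show (-2*(Real.pi:ℂ))*((2*(Real.pi:ℂ))⁻¹* ((⟪v, ξ⟫:ℝ):ℂ))*Complex.I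
      = -(((2*Real.pi) * ((2*(Real.pi:ℂ))⁻¹* ((⟪v, ξ⟫:ℝ):ℂ)))*Complex.I) by ring,
    mul_inv_cancel_left₀ h]
  ring

theorem aux_inv {n : ℕ} (θ : 𝓢(EuclideanSpace ℝ (Fin n), ℂ))
    (θhat : EuclideanSpace ℝ (Fin n) → ℂ)
    (hth : θhat = fun ξ => 𝓕 ⇑θ ((2 * Real.pi)⁻¹ • ξ)) (x : EuclideanSpace ℝ (Fin n)) :
    ((2 * Real.pi) ^ (-(n : ℝ)) : ℝ) • ∫ ξ, Complex.exp (Complex.I * (⟪x, ξ⟫ : ℝ)) * θhat ξ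
      = θ x := by
  have hFi : Integrable (𝓕 ⇑θ) := by
    have := (SchwartzMap.fourierTransformCLM ℂ θ).integrable (μ := volume)
    rwa [SchwartzMap.fourierTransformCLM_apply] at this
  have h : (2 * (Real.pi:ℂ)) ≠ 0 := by simp [Real.pi_ne_zero]
  set g : EuclideanSpace ℝ (Fin n) → ℂ :=
    fun w => Complex.exp ((↑(2 * Real.pi * ⟪w, x⟫) * Complex.I)) * 𝓕 ⇑θ w with hg
  have key : ∀ ξ, Complex.exp (Complex.I * (⟪x, ξ⟫ : ℝ)) * θhat ξ
      = g ((2 * Real.pi)⁻¹ • ξ) := by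
    intro ξ
    rw [hth, hg]
    simp only []
    congr 2
    rw [real_inner_smul_left, real_inner_comm ξ x]
    push_cast
    rw [show (2*(Real.pi:ℂ))*((2*(Real.pi:ℂ))⁻¹* ((⟪ξ, x⟫:ℝ):ℂ))*Complex.I
      = ((2*Real.pi) * ((2*(Real.pi:ℂ))⁻¹* ((⟪ξ, x⟫:ℝ):ℂ)))*Complex.I by ring,
      mul_inv_cancel_left₀ h]
    ring
  have hint : ∫ ξ, Complex.exp (Complex.I * (⟪x, ξ⟫ : ℝ)) * θhat ξ
      = ∫ ξ, g ((2 * Real.pi)⁻¹ • ξ) :=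
    integral_congr_ae (Filter.Eventually.of_forall key)
  rw [hint]
  rw [MeasureTheory.Measure.integral_comp_smul_of_nonneg volume g ((2*Real.pi)⁻¹)
    (hR := by positivity)]
  have hinvert : ∫ w, g w = θ x := by
    have h1 : 𝓕⁻ (𝓕 ⇑θ) x = θ x :=
      (θ.integrable (μ := volume)).fourierInv_fourier_eq hFi θ.continuous.continuousAt
    rw [← h1, Real.fourierInv_eq']
    rfl
  rw [hinvert, smul_smul]
  have hdim : Module.finrank ℝ (EuclideanSpace ℝ (Fin n)) = n := finrank_euclideanSpace_fin
  rw [hdim, inv_pow, inv_inv, Real.rpow_neg (by positivity), Real.rpow_natCast,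
    inv_mul_cancel₀ (by positivity)]
  simp

/-- Ching's counterexample acting on the family `θ_N`: with
`a(x,ξ) = Σ_{j≥1} 2^{jd} Φ_j(ξ) e^{-i x_n 2^j}` and
`θ̂_N(ξ) = Σ_{j=N}^{N²} j⁻¹ 2^{-jd} θ̂(ξ - 2^j e_n)` one has
`a(x,D)θ_N = (Σ_{j=N}^{N²} 1/j)·θ`, and hence for any test function `φ` with
`⟨θ,φ⟩ = 1`, `⟨a(x,D)θ_N, φ⟩ ≥ log N`; so `a(x,D)θ_N ↛ 0` in `𝒟'`. -/
theorem stmt_11 (n : ℕ) (hn : 0 < n) (d : ℝ) (N : ℕ) (hN : 2 ≤ N)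
    (Φ : ℕ → EuclideanSpace ℝ (Fin n) → ℝ)
    (hΦ_cont : ∀ k, Continuous (Φ k))
    -- each `Φ_j` equals 1 on the ball `B(2^j e_n, 1/20)`, where all other
    -- `Φ_k` vanish:
    (hΦ : ∀ j : ℕ, 1 ≤ j → ∀ ξ : EuclideanSpace ℝ (Fin n),
      ‖ξ - (2 : ℝ) ^ j • EuclideanSpace.single (Fin.mk (n-1) (by omega)) (1:ℝ)‖ ≤ 1/20 →
        Φ j ξ = 1 ∧ ∀ k : ℕ, k ≠ j → Φ k ξ = 0)
    (θ : 𝓢(EuclideanSpace ℝ (Fin n), ℂ))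
    (θhat : EuclideanSpace ℝ (Fin n) → ℂ)
    (hθhat : ∀ ξ, θhat ξ = ∫ x, Complex.exp (-(Complex.I * (⟪x, ξ⟫ : ℝ))) * θ x)
    (hθ_spec : ∀ ξ, θhat ξ ≠ 0 → ‖ξ‖ ≤ 1/20)
    (θhatN : EuclideanSpace ℝ (Fin n) → ℂ)
    (hθhatN : ∀ ξ, θhatN ξ = ∑ j ∈ Finset.Icc N (N ^ 2),
      ((j : ℂ))⁻¹ * (((2 : ℝ) ^ (-(j : ℝ) * d) : ℝ) : ℂ) *
        θhat (ξ - (2 : ℝ) ^ j • EuclideanSpace.single (Fin.mk (n-1) (by omega)) (1:ℝ)))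
    (a : EuclideanSpace ℝ (Fin n) → EuclideanSpace ℝ (Fin n) → ℂ)
    (ha : ∀ x ξ, a x ξ = ∑' k : ℕ, if 1 ≤ k then
      (((2 : ℝ) ^ ((k : ℝ) * d) * Φ k ξ : ℝ) : ℂ) *
        Complex.exp (-(Complex.I * (2 : ℂ) ^ k *
          ((x (Fin.mk (n-1) (by omega)) : ℝ) : ℂ)))
      else 0)
    (aθN : EuclideanSpace ℝ (Fin n) → ℂ)
    (haθN : ∀ x, aθN x = ((2 * Real.pi) ^ (-(n : ℝ)) : ℝ) •
      ∫ ξ, Complex.exp (Complex.I * (⟪x, ξ⟫ : ℝ)) * a x ξ * θhatN ξ) :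
    (∀ x, aθN x = ((∑ j ∈ Finset.Icc N (N ^ 2), (1 / (j : ℝ)) : ℝ) : ℂ) * θ x) ∧
    (∀ φ : EuclideanSpace ℝ (Fin n) → ℂ,
      ContDiff ℝ (⊤ : ℕ∞) φ → HasCompactSupport φ → (∫ x, θ x * φ x) = 1 →
        Real.log N ≤ ‖∫ x, aθN x * φ x‖) := by
  have hn1 : n - 1 < n := by omega
  set i : Fin n := ⟨n-1, hn1⟩ with hi
  set ee : EuclideanSpace ℝ (Fin n) := EuclideanSpace.single i (1:ℝ) with hee
  -- restate hypotheses with the normalized index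
  have hΦ' : ∀ j : ℕ, 1 ≤ j → ∀ ξ : EuclideanSpace ℝ (Fin n),
      ‖ξ - (2 : ℝ) ^ j • ee‖ ≤ 1/20 →
        Φ j ξ = 1 ∧ ∀ k : ℕ, k ≠ j → Φ k ξ = 0 := hΦ
  have hθhatN' : ∀ ξ, θhatN ξ = ∑ j ∈ Finset.Icc N (N ^ 2),
      ((j : ℂ))⁻¹ * (((2 : ℝ) ^ (-(j : ℝ) * d) : ℝ) : ℂ) *
        θhat (ξ - (2 : ℝ) ^ j • ee) := hθhatN
  have ha' : ∀ x ξ, a x ξ = ∑' k : ℕ, if 1 ≤ k then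
      (((2 : ℝ) ^ ((k : ℝ) * d) * Φ k ξ : ℝ) : ℂ) *
        Complex.exp (-(Complex.I * (2 : ℂ) ^ k * ((x i : ℝ) : ℂ)))
      else 0 := ha
  -- Fourier facts
  have hth : θhat = fun ξ => 𝓕 ⇑θ ((2 * Real.pi)⁻¹ • ξ) := aux_that θ θhat hθhat
  have hI : Integrable θhat := by
    rw [hth]
    have hFi : Integrable (𝓕 ⇑θ) := by
      have := (SchwartzMap.fourierTransformCLM ℂ θ).integrable (μ := volume)
      rwa [SchwartzMap.fourierTransformCLM_apply] at this
    exact (integrable_comp_smul_iff volume (𝓕 ⇑θ)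
      (show ((2 * Real.pi)⁻¹ : ℝ) ≠ 0 by positivity)).2 hFi
  have hG : ∀ x, Integrable
      (fun η => Complex.exp (Complex.I * (⟪x, η⟫ : ℝ)) * θhat η) := by
    intro x
    apply hI.bdd_mul (c := 1)
    · apply Continuous.aestronglyMeasurable
      exact Complex.continuous_exp.comp (continuous_const.mul
        (Complex.continuous_ofReal.comp (Continuous.inner continuous_const continuous_id)))
    · refine Filter.Eventually.of_forall (fun η => ?_)
      rw [Complex.norm_exp]
      simp
  -- Part 1
  have part1 : ∀ x, aθN x
      = ((∑ j ∈ Finset.Icc N (N ^ 2), (1 / (j : ℝ)) : ℝ) : ℂ) * θ x := by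
    intro x
    have hpt : ∀ ξ, Complex.exp (Complex.I * (⟪x, ξ⟫ : ℝ)) * a x ξ * θhatN ξ
        = ∑ j ∈ Finset.Icc N (N ^ 2), (j : ℂ)⁻¹ *
            (Complex.exp (Complex.I * (⟪x, ξ - (2:ℝ)^j • ee⟫ : ℝ)) *
              θhat (ξ - (2:ℝ)^j • ee)) := by
      intro ξ
      rw [hθhatN' ξ, Finset.mul_sum]
      apply Finset.sum_congr rfl
      intro j hj
      obtain ⟨hjN, hjN2⟩ := Finset.mem_Icc.1 hj
      have hj1 : 1 ≤ j := by omega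
      by_cases hz : θhat (ξ - (2:ℝ)^j • ee) = 0
      · simp [hz]
      · have hball : ‖ξ - (2:ℝ)^j • ee‖ ≤ 1/20 := hθ_spec _ hz
        obtain ⟨hΦ1, hΦ0⟩ := hΦ' j hj1 ξ hball
        have haxξ : a x ξ = (((2:ℝ) ^ ((j:ℝ)*d) : ℝ) : ℂ) *
            Complex.exp (-(Complex.I * (2:ℂ)^j * ((x i : ℝ) : ℂ))) := by
          rw [ha' x ξ, tsum_eq_single j]
          · rw [if_pos hj1, hΦ1, mul_one]
          · intro k hk
            rcases le_or_gt 1 k with h1k | h1k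
            · rw [if_pos h1k, hΦ0 k hk, mul_zero]
              simp
            · rw [if_neg (by omega)]
        have hcan : ((2:ℝ) ^ ((j:ℝ)*d)) * (2:ℝ) ^ (-(j:ℝ)*d) = 1 := by
          rw [← Real.rpow_add (by norm_num),
            show (j:ℝ)*d + -(j:ℝ)*d = 0 by ring, Real.rpow_zero]
        have hcanC : (((2:ℝ) ^ ((j:ℝ)*d) : ℝ) : ℂ) *
            (((2:ℝ) ^ (-(j:ℝ)*d) : ℝ) : ℂ) = 1 := by
          rw [← Complex.ofReal_mul, hcan, Complex.ofReal_one]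
        have hexp : Complex.exp (Complex.I * (⟪x, ξ⟫ : ℝ)) *
            Complex.exp (-(Complex.I * (2:ℂ)^j * ((x i : ℝ) : ℂ)))
            = Complex.exp (Complex.I * (⟪x, ξ - (2:ℝ)^j • ee⟫ : ℝ)) := by
          rw [← Complex.exp_add]
          congr 1
          rw [inner_sub_right]
          have hvj : (⟪x, (2:ℝ)^j • ee⟫ : ℝ) = (2:ℝ)^j * x i := by
            rw [hee]
            simp [real_inner_smul_right, EuclideanSpace.inner_single_right]
          rw [hvj]
          push_cast
          ring
        rw [haxξ, ← hexp]
        linear_combination ((j:ℂ)⁻¹ * Complex.exp (Complex.I * ((⟪x, ξ⟫ : ℝ) : ℂ)) *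
          Complex.exp (-(Complex.I * (2:ℂ)^j * ((x i : ℝ) : ℂ))) *
          θhat (ξ - (2:ℝ)^j • ee)) * hcanC
    have hsummand : ∀ j ∈ Finset.Icc N (N ^ 2), Integrable (fun ξ =>
        (j : ℂ)⁻¹ * (Complex.exp (Complex.I * (⟪x, ξ - (2:ℝ)^j • ee⟫ : ℝ)) *
          θhat (ξ - (2:ℝ)^j • ee))) := by
      intro j _
      exact ((hG x).comp_sub_right ((2:ℝ)^j • ee)).const_mul _
    have hmain : ∫ ξ, Complex.exp (Complex.I * (⟪x, ξ⟫ : ℝ)) * a x ξ * θhatN ξ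
        = (∑ j ∈ Finset.Icc N (N ^ 2), (j : ℂ)⁻¹) *
            ∫ η, Complex.exp (Complex.I * (⟪x, η⟫ : ℝ)) * θhat η := by
      rw [integral_congr_ae (Filter.Eventually.of_forall hpt),
        integral_finset_sum _ hsummand, Finset.sum_mul]
      apply Finset.sum_congr rfl
      intro j _
      rw [integral_const_mul]
      congr 1
      exact integral_sub_right_eq_self
        (fun η => Complex.exp (Complex.I * (⟪x, η⟫ : ℝ)) * θhat η) ((2:ℝ)^j • ee)
    rw [haθN x, hmain, ← mul_smul_comm, aux_inv θ θhat hth x]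
    congr 1
    push_cast [one_div]
    rfl
  refine ⟨part1, ?_⟩
  intro φ hφc hφsupp hφint
  have hval : ∫ x, aθN x * φ x
      = ((∑ j ∈ Finset.Icc N (N ^ 2), (1 / (j : ℝ)) : ℝ) : ℂ) := by
    calc ∫ x, aθN x * φ x
        = ∫ x, ((∑ j ∈ Finset.Icc N (N ^ 2), (1 / (j : ℝ)) : ℝ) : ℂ) * (θ x * φ x) := by
          apply integral_congr_ae
          filter_upwards with x
          rw [part1 x, mul_assoc]
      _ = ((∑ j ∈ Finset.Icc N (N ^ 2), (1 / (j : ℝ)) : ℝ) : ℂ) * ∫ x, θ x * φ x :=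
          integral_const_mul _ _
      _ = _ := by rw [hφint, mul_one]
  rw [hval]
  have hS : 0 ≤ ∑ j ∈ Finset.Icc N (N ^ 2), (1 / (j : ℝ)) :=
    Finset.sum_nonneg (fun j _ => by positivity)
  rw [Complex.norm_real, Real.norm_eq_abs, abs_of_nonneg hS]
  exact aux_harmonic N hN
end

section
/- Let K(x,y) be measurable on ℝⁿ×ℝⁿ with the property that for some R > 0 and every x, the function y ↦ K(x,y) satisfies |K(x,y)·φ_j(y−x)| ≤ ‖ℱ^{-1}(φ_j ℱ b(x,·))‖_{L^1} for all j ∈ ℤ, where φ_j(z) = Φ(2^{-j}z) is a homogeneous dyadic partition of unity. Then for any 0 < t ≤ 1 and any locally integrable v, (Σ_{j∈ℤ} ∫_{B(x,2^j)} |v(y)|^t dy · 2^{jn}/|B(x,2^j)| · ‖K(x,·)φ_j(·−x)‖_∞^t)^{1/t} ≤ ‖b(x,·)‖_{Ḃ^{n/t}_{1,t}} · M_t v(x), where M_t v(x) = sup_{r>0} (|B(x,r)|^{-1} ∫_{B(x,r)} |v|^t)^{1/t} and ‖g‖_{Ḃ^{n/t}_{1,t}} = (Σ_{j∈ℤ}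 2^{jn t/t} ‖φ_j(D)g‖_{L^1}^t)^{1/t} is the homogeneous Besov norm. -/
open MeasureTheory Metric
open scoped ENNReal NNReal

/-!
Each term of the left-hand sum factors as `2^{jn} ‖K φ_j(· - x)‖_∞^t` times the `t`-average
of `v` over `B(x, 2^j)`. The first factor is at most `2^{jn} c_j^t` by the shell bound on `K`,
and the second is at most the supremum over all balls, which therefore comes out of the sum.
-/

lemma iSup_nnnorm_le_ofReal {α E : Type*} [SeminormedAddGroup E] {f : α → E} {C : ℝ}
    (h : ∀ a, ‖f a‖ ≤ C) : ⨆ a, (‖f a‖₊ : ℝ≥0∞) ≤ ENNReal.ofReal C :=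
  iSup_le fun a => (ofReal_norm (f a)).symm.trans_le (ENNReal.ofReal_le_ofReal (h a))

lemma ENNReal.rpow_tsum_le_rpow_tsum_mul_rpow {ι : Type*} {f g : ι → ℝ≥0∞} {M : ℝ≥0∞} {p : ℝ}
    (hp : 0 ≤ p) (h : ∀ i, f i ≤ g i * M) :
    (∑' i, f i) ^ p ≤ (∑' i, g i) ^ p * M ^ p := by
  rw [← ENNReal.mul_rpow_of_nonneg _ _ hp, ← ENNReal.tsum_mul_right]
  exact ENNReal.rpow_le_rpow (ENNReal.tsum_le_tsum h) hp

theorem stmt_14_general (n : ℕ) (t : ℝ) (ht0 : 0 < t)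
    (x : EuclideanSpace ℝ (Fin n))
    (K : EuclideanSpace ℝ (Fin n) → ℂ)        -- `K(x,·)`
    (φ : ℤ → EuclideanSpace ℝ (Fin n) → ℝ)    -- homogeneous dyadic partition
    (v : EuclideanSpace ℝ (Fin n) → ℂ)
    (c : ℤ → ℝ)
    -- `c j = ‖ℱ⁻¹(φ_j ℱ b(x,·))‖_{L¹}` dominates `K(x,·)` on the `j`-th shell:
    (hK : ∀ (j : ℤ) (y : EuclideanSpace ℝ (Fin n)), ‖K y * (φ j (y - x) : ℂ)‖ ≤ c j) :
    (∑' j : ℤ,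
        (∫⁻ y in ball x ((2:ℝ) ^ j), (‖v y‖₊ : ℝ≥0∞) ^ t) *
          ((2 : ℝ≥0∞) ^ ((j : ℝ) * n) * (volume (ball x ((2:ℝ) ^ j)))⁻¹) *
          (⨆ y, (‖K y * (φ j (y - x) : ℂ)‖₊ : ℝ≥0∞)) ^ t) ^ (1/t)
      ≤ (∑' j : ℤ, (2 : ℝ≥0∞) ^ ((j : ℝ) * n) * (ENNReal.ofReal (c j)) ^ t) ^ (1/t) *
        (⨆ r : ℝ, ⨆ _ : 0 < r,
          ((volume (ball x r))⁻¹ * ∫⁻ y in ball x r, (‖v y‖₊ : ℝ≥0∞) ^ t)) ^ (1/t) := by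
  refine ENNReal.rpow_tsum_le_rpow_tsum_mul_rpow (by positivity) fun j => ?_
  calc (∫⁻ y in ball x ((2:ℝ) ^ j), (‖v y‖₊ : ℝ≥0∞) ^ t) *
          ((2 : ℝ≥0∞) ^ ((j : ℝ) * n) * (volume (ball x ((2:ℝ) ^ j)))⁻¹) *
          (⨆ y, (‖K y * (φ j (y - x) : ℂ)‖₊ : ℝ≥0∞)) ^ t
      = (2 : ℝ≥0∞) ^ ((j : ℝ) * n) * (⨆ y, (‖K y * (φ j (y - x) : ℂ)‖₊ : ℝ≥0∞)) ^ t *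
          ((volume (ball x ((2:ℝ) ^ j)))⁻¹ *
            ∫⁻ y in ball x ((2:ℝ) ^ j), (‖v y‖₊ : ℝ≥0∞) ^ t) := by ring
    _ ≤ (2 : ℝ≥0∞) ^ ((j : ℝ) * n) * (ENNReal.ofReal (c j)) ^ t *
          ⨆ r : ℝ, ⨆ _ : 0 < r,
            ((volume (ball x r))⁻¹ * ∫⁻ y in ball x r, (‖v y‖₊ : ℝ≥0∞) ^ t) := by
      gcongr
      · exact iSup_nnnorm_le_ofReal (hK j)
      · exact le_iSup₂_of_le ((2 : ℝ) ^ j) (by positivity) le_rfl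

/-- The dyadic-shell estimate in the proof of Marschall's inequality: if for
every `j ∈ ℤ`, `|K(x,y)·φ_j(y−x)| ≤ c_j := ‖ℱ⁻¹(φ_j ℱ b(x,·))‖_{L¹}`, then
`(Σ_j ∫_{B(x,2^j)} |v|^t · 2^{jn}/|B(x,2^j)| · ‖K(x,·)φ_j(·−x)‖_∞^t)^{1/t}
  ≤ ‖b(x,·)‖_{Ḃ^{n/t}_{1,t}} · M_t v(x)`,
where `‖b(x,·)‖_{Ḃ^{n/t}_{1,t}} = (Σ_j 2^{jn} c_j^t)^{1/t}` and
`M_t v(x) = sup_{r>0} (|B(x,r)|⁻¹ ∫_{B(x,r)} |v|^t)^{1/t}`. -/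
theorem stmt_14 (n : ℕ) (t : ℝ) (ht0 : 0 < t) (ht1 : t ≤ 1)
    (x : EuclideanSpace ℝ (Fin n))
    (K : EuclideanSpace ℝ (Fin n) → ℂ)        -- `K(x,·)`
    (φ : ℤ → EuclideanSpace ℝ (Fin n) → ℝ)    -- homogeneous dyadic partition
    (v : EuclideanSpace ℝ (Fin n) → ℂ)
    (hv : MeasureTheory.LocallyIntegrable v volume)
    (c : ℤ → ℝ) (hc : ∀ j, 0 ≤ c j)
    -- `c j = ‖ℱ⁻¹(φ_j ℱ b(x,·))‖_{L¹}` dominates `K(x,·)` on the `j`-th shell: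
    (hK : ∀ (j : ℤ) (y : EuclideanSpace ℝ (Fin n)), ‖K y * (φ j (y - x) : ℂ)‖ ≤ c j) :
    (∑' j : ℤ,
        (∫⁻ y in ball x ((2:ℝ) ^ j), (‖v y‖₊ : ℝ≥0∞) ^ t) *
          ((2 : ℝ≥0∞) ^ ((j : ℝ) * n) * (volume (ball x ((2:ℝ) ^ j)))⁻¹) *
          (⨆ y, (‖K y * (φ j (y - x) : ℂ)‖₊ : ℝ≥0∞)) ^ t) ^ (1/t)
      ≤ (∑' j : ℤ, (2 : ℝ≥0∞) ^ ((j : ℝ) * n) * (ENNReal.ofReal (c j)) ^ t) ^ (1/t) *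
        (⨆ r : ℝ, ⨆ _ : 0 < r,
          ((volume (ball x r))⁻¹ * ∫⁻ y in ball x r, (‖v y‖₊ : ℝ≥0∞) ^ t)) ^ (1/t) :=
  stmt_14_general n t ht0 x K φ v c hK
end
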